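/- Let R be a right Ore ring with classical right ring of quotients Q_cl(R), and let δ be a derivation on R. Then the extension of δ to Q_cl(R) agrees with the extensions of δ to the maximal right ring of quotients Q_max(R) and to the total right ring of quotients Q_tot(R). -/
import Mathlib


open MulOpposite

/-- A derivation on a ring `S`: an additive map satisfying the Leibniz rule
`δ (a * b) = δ a * b + a * δ b`. -/
def IsDerivation {S : Type*} [Ring S] (δ : S → S) : Prop :=
  (∀ a b : S, δ (a + b) = δ a + δ b) ∧ (∀ a b : S, δ (a * b) = δ a * b + a * δ b)

/-- A Gabriel filter of left ideals of a ring `S`.  Taking `S = Rᵐᵒᵖ`, this encodes a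
Gabriel filter of right ideals of `R` (a right ideal of `R` is a left ideal of `Rᵐᵒᵖ`). -/
structure GabrielFilter (S : Type*) [Ring S] where
  sets : Set (Ideal S)
  top_mem : ⊤ ∈ sets
  mono : ∀ ⦃I J : Ideal S⦄, I ∈ sets → I ≤ J → J ∈ sets
  inf_mem : ∀ ⦃I J : Ideal S⦄, I ∈ sets → J ∈ sets → I ⊓ J ∈ sets
  quot_mem : ∀ ⦃I : Ideal S⦄, I ∈ sets → ∀ s : S,
    Submodule.comap (LinearMap.toSpanSingleton S S s) I ∈ sets
  trans : ∀ ⦃I J : Ideal S⦄, J ∈ sets →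
    (∀ s ∈ J, Submodule.comap (LinearMap.toSpanSingleton S S s) I ∈ sets) → I ∈ sets

/-- A Gabriel filter of right ideals of `R`, encoded as a Gabriel filter of left ideals
of `Rᵐᵒᵖ`. -/
abbrev RightGabrielFilter (R : Type*) [Ring R] := GabrielFilter Rᵐᵒᵖ

/-- The torsion set of a module for the hereditary torsion theory corresponding to a
(Gabriel) filter `𝔉` of ideals: the elements whose annihilator ideal belongs to `𝔉`. -/
def torsionSet {S : Type*} [Ring S] (𝔉 : Set (Ideal S)) (M : Type*) [AddCommGroup M]
    [Module S M] : Set M :=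
  {x : M | LinearMap.ker (LinearMap.toSpanSingleton S M x) ∈ 𝔉}

/-- `q : M → Q` realizes `Q` as the module of quotients of `M` with respect to the filter
`𝔉`: the kernel of `q` is the torsion submodule of `M`, `Q` is torsion free, the cokernel
of `q` is torsion, and `Q` is `𝔉`-injective (closed). -/
structure IsModuleOfQuotients {S : Type*} [Ring S] (𝔉 : Set (Ideal S)) {M Q : Type*}
    [AddCommGroup M] [Module S M] [AddCommGroup Q] [Module S Q] (q : M →ₗ[S] Q) : Prop where
  ker_eq : (LinearMap.ker q : Set M) = torsionSet 𝔉 M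
  torsionFree : torsionSet 𝔉 Q = {0}
  coker_torsion : ∀ y : Q,
    Submodule.comap (LinearMap.toSpanSingleton S Q y) (LinearMap.range q) ∈ 𝔉
  closed : ∀ I ∈ 𝔉, ∀ f : ↥I →ₗ[S] Q, ∃ g : S →ₗ[S] Q, ∀ x : ↥I, g ↑x = f x

/-- `d` is a `δ`-derivation on the right `R`-module `M` (encoded as a left `Rᵐᵒᵖ`-module):
`d` is additive and `d (x·r) = (d x)·r + x·(δ r)`. -/
def IsRightModuleDerivation {R : Type*} [Ring R] (δ : R → R) {M : Type*} [AddCommGroup M]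
    [Module Rᵐᵒᵖ M] (d : M → M) : Prop :=
  (∀ x y : M, d (x + y) = d x + d y) ∧
    ∀ (x : M) (r : R), d (op r • x) = op r • d x + op (δ r) • x

/-- A right Gabriel filter is differential if for every `I` in the filter there is `J` in
the filter with `δ(J) ⊆ I` for every derivation `δ`. -/
def IsDifferentialRight {R : Type*} [Ring R] (F : RightGabrielFilter R) : Prop :=
  ∀ I ∈ F.sets, ∃ J ∈ F.sets, ∀ δ : R → R, IsDerivation δ →
    ∀ x : Rᵐᵒᵖ, x ∈ J → op (δ (unop x)) ∈ I

/-- `q : R → Q` realizes the ring `Q` as the right ring of quotients of `R` with respect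
to the right Gabriel filter `F`.  The right `R`-module structure of `Q` is the one coming
from the ring structure via `q`, and `q` is a ring homomorphism which is a module of
quotients map. -/
structure IsRightRingOfQuotients {R : Type*} [Ring R] (F : RightGabrielFilter R)
    {Q : Type*} [Ring Q] [Module Rᵐᵒᵖ Q] (q : R →ₗ[Rᵐᵒᵖ] Q) : Prop where
  smul_def : ∀ (r : R) (y : Q), op r • y = y * q r
  map_mul : ∀ a b : R, q (a * b) = q a * q b
  map_one : q 1 = 1
  quotients : IsModuleOfQuotients F.sets q

universe u

/-- A right ideal of `R` (encoded as a left ideal of `Rᵐᵒᵖ`) is dense if for all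
`x y : R` with `x ≠ 0` there is `r : R` with `y * r ∈ I` and `x * r ≠ 0`.  The dense
right ideals form the Gabriel filter of the Lambek torsion theory. -/
def IsDenseRightIdeal {R : Type*} [Ring R] (I : Ideal Rᵐᵒᵖ) : Prop :=
  ∀ x y : R, x ≠ 0 → ∃ r : R, op r * op y ∈ I ∧ x * r ≠ 0

/-- Data exhibiting a right Gabriel filter `F` as a perfect filter: a ring `S` which is a
right ring of quotients of `R` with respect to `F` via `f : R → S`, such that `F` is
exactly the family of right ideals `J` with `f(J)S = S`. -/
structure PerfectRingData {R : Type u} [Ring R] (F : RightGabrielFilter R) :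
    Type (u + 1) where
  S : Type u
  [ringS : Ring S]
  [modS : Module Rᵐᵒᵖ S]
  f : R →ₗ[Rᵐᵒᵖ] S
  filter_eq : F.sets =
    {J : Ideal Rᵐᵒᵖ |
      Submodule.span Sᵐᵒᵖ ((fun j : Rᵐᵒᵖ => f (unop j)) '' (J : Set Rᵐᵒᵖ)) = ⊤}
  isROQ : IsRightRingOfQuotients F f

/-- A right Gabriel filter is perfect if its ring of quotients makes it a perfect right
localization. -/
def IsPerfectFilter {R : Type u} [Ring R] (F : RightGabrielFilter R) : Prop :=
  Nonempty (PerfectRingData F)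


/-! ### Auxiliary development -/

section AuxDer

variable {R : Type*} [Ring R]

lemma IsDerivation.zero' {δ : R → R} (hδ : IsDerivation δ) : δ 0 = 0 := by
  have h := hδ.1 0 0
  rw [add_zero] at h
  exact left_eq_add.mp h

lemma IsDerivation.neg' {δ : R → R} (hδ : IsDerivation δ) (a : R) : δ (-a) = -δ a := by
  have h := hδ.1 a (-a)
  rw [add_neg_cancel, hδ.zero'] at h
  exact eq_neg_of_add_eq_zero_right h.symm

lemma IsDerivation.sub' {δ : R → R} (hδ : IsDerivation δ) (a b : R) :
    δ (a - b) = δ a - δ b := by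
  rw [sub_eq_add_neg, hδ.1, hδ.neg', sub_eq_add_neg]

/-- The ideal of elements of `I` whose `δ`-image is again in `I`. -/
def derIdeal (δ : R → R) (hδ : IsDerivation δ) (I : Ideal Rᵐᵒᵖ) : Ideal Rᵐᵒᵖ where
  carrier := {x | x ∈ I ∧ op (δ (unop x)) ∈ I}
  add_mem' := by
    rintro a b ⟨ha1, ha2⟩ ⟨hb1, hb2⟩
    refine ⟨I.add_mem ha1 hb1, ?_⟩
    rw [unop_add, hδ.1, op_add]
    exact I.add_mem ha2 hb2
  zero_mem' := ⟨I.zero_mem, by rw [unop_zero, hδ.zero', op_zero]; exact I.zero_mem⟩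
  smul_mem' := by
    rintro a x ⟨hx1, hx2⟩
    refine ⟨I.smul_mem a hx1, ?_⟩
    have h1 : unop (a • x) = unop x * unop a := rfl
    rw [h1, hδ.2, op_add]
    refine I.add_mem ?_ ?_
    · have h2 : op (δ (unop x) * unop a) = a • op (δ (unop x)) := by
        rw [op_mul, op_unop]; rfl
      rw [h2]; exact I.smul_mem _ hx2
    · have h2 : op (unop x * δ (unop a)) = op (δ (unop a)) • x := by
        rw [op_mul, op_unop]; rfl
      rw [h2]; exact I.smul_mem _ hx1

lemma mem_derIdeal {δ : R → R} {hδ : IsDerivation δ} {I : Ideal Rᵐᵒᵖ} {x : Rᵐᵒᵖ} :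
    x ∈ derIdeal δ hδ I ↔ x ∈ I ∧ op (δ (unop x)) ∈ I := Iff.rfl

lemma derIdeal_mem (F : RightGabrielFilter R) (δ : R → R) (hδ : IsDerivation δ)
    {I : Ideal Rᵐᵒᵖ} (hI : I ∈ F.sets) : derIdeal δ hδ I ∈ F.sets := by
  refine F.trans hI (fun s hs => F.mono (F.quot_mem hI (op (δ (unop s)))) ?_)
  intro x hx
  simp only [Submodule.mem_comap, LinearMap.toSpanSingleton_apply] at hx ⊢
  refine ⟨I.smul_mem x hs, ?_⟩
  have h1 : unop (x • s) = unop s * unop x := rfl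
  rw [h1, hδ.2, op_add]
  refine I.add_mem ?_ ?_
  · have h2 : op (δ (unop s) * unop x) = x • op (δ (unop s)) := by
      rw [op_mul, op_unop]; rfl
    rw [h2]; exact hx
  · have h2 : op (unop s * δ (unop x)) = op (δ (unop x)) • s := by
      rw [op_mul, op_unop]; rfl
    rw [h2]; exact I.smul_mem _ hs

lemma torsionSet_delta (F : RightGabrielFilter R) {δ : R → R} (hδ : IsDerivation δ)
    {r : R} (h : r ∈ torsionSet F.sets R) : δ r ∈ torsionSet F.sets R := by
  have hK : LinearMap.ker (LinearMap.toSpanSingleton Rᵐᵒᵖ R r) ∈ F.sets := h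
  show LinearMap.ker (LinearMap.toSpanSingleton Rᵐᵒᵖ R (δ r)) ∈ F.sets
  refine F.mono (derIdeal_mem F δ hδ hK) ?_
  rintro x ⟨hx1, hx2⟩
  rw [LinearMap.mem_ker, LinearMap.toSpanSingleton_apply] at hx1 hx2 ⊢
  have e1 : r * unop x = 0 := hx1
  have e2 : r * δ (unop x) = 0 := hx2
  have e3 : δ (r * unop x) = 0 := by rw [e1, hδ.zero']
  rw [hδ.2, e2, add_zero] at e3
  show δ r * unop x = 0
  exact e3

lemma q_delta_congr (F : RightGabrielFilter R) {δ : R → R} (hδ : IsDerivation δ)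
    {Q : Type*} [AddCommGroup Q] [Module Rᵐᵒᵖ Q] {q : R →ₗ[Rᵐᵒᵖ] Q}
    (hq : IsModuleOfQuotients F.sets q) {r r' : R} (h : q r = q r') :
    q (δ r) = q (δ r') := by
  have h2 : r - r' ∈ torsionSet F.sets R := by
    rw [← hq.ker_eq]
    show r - r' ∈ LinearMap.ker q
    rw [LinearMap.mem_ker, map_sub, sub_eq_zero]; exact h
  have h3 : δ (r - r') ∈ torsionSet F.sets R := torsionSet_delta F hδ h2
  have h4 : δ (r - r') ∈ LinearMap.ker q := by
    rw [← SetLike.mem_coe, hq.ker_eq]; exact h3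
  rw [LinearMap.mem_ker, hδ.sub', map_sub, sub_eq_zero] at h4
  exact h4

/-- The defining predicate for the value of the extended derivation at `y`. -/
def ExtP (F : RightGabrielFilter R) {Q : Type*} [Ring Q] [Module Rᵐᵒᵖ Q]
    (q : R →ₗ[Rᵐᵒᵖ] Q) (δ : R → R) (y v : Q) : Prop :=
  ∃ J ∈ F.sets, ∀ x ∈ J, (∃ r : R, q r = x • y) ∧
    ∀ r : R, q r = x • y → x • v = q (δ r) - op (δ (unop x)) • y

variable (F : RightGabrielFilter R) {Q : Type*} [Ring Q] [Module Rᵐᵒᵖ Q]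
  (q : R →ₗ[Rᵐᵒᵖ] Q) {δ : R → R}

lemma extP_unique (hq : IsRightRingOfQuotients F q) {y v v' : Q}
    (h : ExtP F q δ y v) (h' : ExtP F q δ y v') : v = v' := by
  obtain ⟨J, hJ, hP⟩ := h
  obtain ⟨J', hJ', hP'⟩ := h'
  have key : v - v' ∈ torsionSet F.sets Q := by
    show LinearMap.ker (LinearMap.toSpanSingleton Rᵐᵒᵖ Q (v - v')) ∈ F.sets
    refine F.mono (F.inf_mem hJ hJ') ?_
    intro x hx
    rw [Submodule.mem_inf] at hx
    rw [LinearMap.mem_ker, LinearMap.toSpanSingleton_apply, smul_sub]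
    obtain ⟨r, hr⟩ := (hP x hx.1).1
    rw [(hP x hx.1).2 r hr, (hP' x hx.2).2 r hr, sub_self]
  rw [hq.quotients.torsionFree] at key
  exact sub_eq_zero.mp key

lemma extP_exists (hq : IsRightRingOfQuotients F q) (hδ : IsDerivation δ) (y : Q) :
    ∃ v, ExtP F q δ y v := by
  classical
  set Iy := Submodule.comap (LinearMap.toSpanSingleton Rᵐᵒᵖ Q y) (LinearMap.range q)
    with hIydef
  have hIyF : Iy ∈ F.sets := hq.quotients.coker_torsion y
  have hJF : derIdeal δ hδ Iy ∈ F.sets := derIdeal_mem F δ hδ hIyF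
  set J := derIdeal δ hδ Iy with hJdef
  have hxr : ∀ x : ↥J, ∃ r : R, q r = (x : Rᵐᵒᵖ) • y := by
    intro x
    have h1 : (x : Rᵐᵒᵖ) ∈ J := x.2
    have h2 : (x : Rᵐᵒᵖ) ∈ Iy := (mem_derIdeal.mp h1).1
    rw [hIydef, Submodule.mem_comap, LinearMap.toSpanSingleton_apply] at h2
    exact h2
  set rr : ↥J → R := fun x => Classical.choose (hxr x) with hrrdef
  have hrr : ∀ x : ↥J, q (rr x) = (x : Rᵐᵒᵖ) • y := fun x => Classical.choose_spec (hxr x)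
  set f : ↥J →ₗ[Rᵐᵒᵖ] Q :=
    { toFun := fun x => q (δ (rr x)) - op (δ (unop (x : Rᵐᵒᵖ))) • y
      map_add' := by
        intro x x'
        have e1 : q (rr (x + x')) = q (rr x + rr x') := by
          rw [hrr, map_add, hrr, hrr, Submodule.coe_add, add_smul]
        have e2 : q (δ (rr (x + x'))) = q (δ (rr x)) + q (δ (rr x')) := by
          rw [q_delta_congr F hδ hq.quotients e1, hδ.1, map_add]
        rw [e2, Submodule.coe_add, unop_add, hδ.1, op_add, add_smul]
        abel
      map_smul' := by
        intro a x
        dsimp only [RingHom.id_apply]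
        have e1 : q (rr (a • x)) = q (a • rr x) := by
          rw [hrr, map_smul, hrr, Submodule.coe_smul, smul_eq_mul, mul_smul]
        have e2 : q (δ (rr (a • x))) = a • q (δ (rr x)) + op (δ (unop a)) • q (rr x) := by
          rw [q_delta_congr F hδ hq.quotients e1]
          have e3 : δ (a • rr x) = a • δ (rr x) + op (δ (unop a)) • rr x := by
            show δ (rr x * unop a) = _
            rw [hδ.2]; rfl
          rw [e3, map_add, map_smul, map_smul]
        have e4 : op (δ (unop ((a • x : ↥J) : Rᵐᵒᵖ))) • y
            = a • (op (δ (unop (x : Rᵐᵒᵖ))) • y) + op (δ (unop a)) • ((x : Rᵐᵒᵖ) • y) := by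
          have h1 : unop ((a • x : ↥J) : Rᵐᵒᵖ) = unop (x : Rᵐᵒᵖ) * unop a := rfl
          rw [h1, hδ.2, op_add, add_smul]
          congr 1
          · rw [show op (δ (unop (x : Rᵐᵒᵖ)) * unop a) = a * op (δ (unop (x : Rᵐᵒᵖ)))
              from by rw [op_mul, op_unop], mul_smul]
          · rw [show op (unop (x : Rᵐᵒᵖ) * δ (unop a)) = op (δ (unop a)) * (x : Rᵐᵒᵖ)
              from by rw [op_mul, op_unop], mul_smul]
        rw [e2, e4, hrr x, smul_sub]
        abel }
    with hfdef
  have f_apply : ∀ x : ↥J, f x = q (δ (rr x)) - op (δ (unop (x : Rᵐᵒᵖ))) • y :=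
    fun _ => rfl
  obtain ⟨g, hg⟩ := hq.quotients.closed J hJF f
  refine ⟨g 1, J, hJF, fun x hx => ⟨hxr ⟨x, hx⟩, ?_⟩⟩
  intro r hr
  have h1 : x • g 1 = f ⟨x, hx⟩ := by
    rw [← hg ⟨x, hx⟩, ← map_smul]
    congr 1
    exact mul_one x
  rw [h1, f_apply]
  have h2 : q (δ (rr ⟨x, hx⟩)) = q (δ r) :=
    q_delta_congr F hδ hq.quotients (by rw [hrr]; exact hr.symm)
  rw [h2]

lemma extP_map (hq : IsRightRingOfQuotients F q) (hδ : IsDerivation δ) (r : R) :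
    ExtP F q δ (q r) (q (δ r)) := by
  refine ⟨⊤, F.top_mem, fun x _ => ⟨⟨r * unop x, map_smul q x r⟩, ?_⟩⟩
  intro r' hr'
  have e0 : q r' = q (x • r) := hr'.trans (map_smul q x r).symm
  have e1 : q (δ r') = q (δ (x • r)) := q_delta_congr F hδ hq.quotients e0
  have e2 : q (δ (x • r)) = x • q (δ r) + op (δ (unop x)) • q r := by
    have e3 : δ (x • r) = x • δ r + op (δ (unop x)) • r := by
      show δ (r * unop x) = _
      rw [hδ.2]; rfl
    rw [e3, map_add, map_smul, map_smul]
  rw [e1, e2, add_sub_cancel_right]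

lemma extP_add (hq : IsRightRingOfQuotients F q) (hδ : IsDerivation δ) {y y' v v' : Q}
    (h : ExtP F q δ y v) (h' : ExtP F q δ y' v') : ExtP F q δ (y + y') (v + v') := by
  obtain ⟨J, hJ, hP⟩ := h
  obtain ⟨J', hJ', hP'⟩ := h'
  refine ⟨J ⊓ J', F.inf_mem hJ hJ', fun x hx => ?_⟩
  rw [Submodule.mem_inf] at hx
  obtain ⟨r₁, hr₁⟩ := (hP x hx.1).1
  obtain ⟨r₂, hr₂⟩ := (hP' x hx.2).1
  constructor
  · exact ⟨r₁ + r₂, by rw [map_add, hr₁, hr₂, smul_add]⟩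
  · intro r hr
    have e0 : q r = q (r₁ + r₂) := by rw [map_add, hr₁, hr₂, ← smul_add]; exact hr
    have e1 : q (δ r) = q (δ r₁) + q (δ r₂) := by
      rw [q_delta_congr F hδ hq.quotients e0, hδ.1, map_add]
    rw [smul_add, (hP x hx.1).2 r₁ hr₁, (hP' x hx.2).2 r₂ hr₂, e1, smul_add]
    abel

lemma extP_smul (hq : IsRightRingOfQuotients F q) (hδ : IsDerivation δ) {y v : Q}
    (h : ExtP F q δ y v) (a : Rᵐᵒᵖ) :
    ExtP F q δ (a • y) (a • v + op (δ (unop a)) • y) := by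
  obtain ⟨J, hJ, hP⟩ := h
  refine ⟨Submodule.comap (LinearMap.toSpanSingleton Rᵐᵒᵖ Rᵐᵒᵖ a) J, F.quot_mem hJ a,
    fun x hx => ?_⟩
  rw [Submodule.mem_comap, LinearMap.toSpanSingleton_apply] at hx
  have hxa : x * a ∈ J := hx
  constructor
  · obtain ⟨r, hr⟩ := (hP _ hxa).1
    exact ⟨r, hr.trans (mul_smul x a y)⟩
  · intro r hr
    have hr' : q r = (x * a) • y := hr.trans (mul_smul x a y).symm
    have base := (hP _ hxa).2 r hr'
    have hu : op (δ (unop (x * a))) • y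
        = x • (op (δ (unop a)) • y) + op (δ (unop x)) • (a • y) := by
      have h1 : unop (x * a) = unop a * unop x := rfl
      rw [h1, hδ.2, op_add, add_smul]
      congr 1
      · rw [show op (δ (unop a) * unop x) = x * op (δ (unop a))
          from by rw [op_mul, op_unop], mul_smul]
      · rw [show op (unop a * δ (unop x)) = op (δ (unop x)) * a
          from by rw [op_mul, op_unop], mul_smul]
    rw [hu] at base
    rw [smul_add, ← mul_smul, base]
    abel

/-- The extension of the derivation `δ` to the ring of quotients `Q`. -/
noncomputable def extDer (hq : IsRightRingOfQuotients F q) (hδ : IsDerivation δ) :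
    Q → Q :=
  fun y => Classical.choose (extP_exists F q hq hδ y)

lemma extDer_spec (hq : IsRightRingOfQuotients F q) (hδ : IsDerivation δ) (y : Q) :
    ExtP F q δ y (extDer F q hq hδ y) :=
  Classical.choose_spec (extP_exists F q hq hδ y)

lemma extDer_map (hq : IsRightRingOfQuotients F q) (hδ : IsDerivation δ) (r : R) :
    extDer F q hq hδ (q r) = q (δ r) :=
  extP_unique F q hq (extDer_spec F q hq hδ (q r)) (extP_map F q hq hδ r)

lemma extDer_add (hq : IsRightRingOfQuotients F q) (hδ : IsDerivation δ) (y y' : Q) :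
    extDer F q hq hδ (y + y') = extDer F q hq hδ y + extDer F q hq hδ y' :=
  extP_unique F q hq (extDer_spec F q hq hδ (y + y'))
    (extP_add F q hq hδ (extDer_spec F q hq hδ y) (extDer_spec F q hq hδ y'))

lemma extDer_smul (hq : IsRightRingOfQuotients F q) (hδ : IsDerivation δ)
    (a : Rᵐᵒᵖ) (y : Q) :
    extDer F q hq hδ (a • y) = a • extDer F q hq hδ y + op (δ (unop a)) • y :=
  extP_unique F q hq (extDer_spec F q hq hδ (a • y))
    (extP_smul F q hq hδ (extDer_spec F q hq hδ y) a)

end AuxDer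

section Vanish

variable {R : Type*} [Ring R]

lemma vanish_aux {F F' : RightGabrielFilter R} (hFF' : F.sets ⊆ F'.sets)
    {Q Q' : Type*} [AddCommGroup Q] [Module Rᵐᵒᵖ Q] [AddCommGroup Q'] [Module Rᵐᵒᵖ Q']
    (q : R →ₗ[Rᵐᵒᵖ] Q)
    (hcok : ∀ y : Q, Submodule.comap (LinearMap.toSpanSingleton Rᵐᵒᵖ Q y)
      (LinearMap.range q) ∈ F.sets)
    (htf : torsionSet F'.sets Q' = {0})
    (D : Q → Q') (hs : ∀ (x : Rᵐᵒᵖ) (u : Q), D (x • u) = x • D u)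
    (h0 : ∀ r : R, D (q r) = 0) (u : Q) : D u = 0 := by
  have key : D u ∈ torsionSet F'.sets Q' := by
    show LinearMap.ker (LinearMap.toSpanSingleton Rᵐᵒᵖ Q' (D u)) ∈ F'.sets
    refine hFF' (F.mono (hcok u) ?_)
    intro x hx
    rw [Submodule.mem_comap, LinearMap.toSpanSingleton_apply] at hx
    obtain ⟨r, hr⟩ := hx
    rw [LinearMap.mem_ker, LinearMap.toSpanSingleton_apply, ← hs, ← hr, h0]
  rw [htf] at key
  exact key

lemma extDer_mul (F : RightGabrielFilter R) {Q : Type*} [Ring Q] [Module Rᵐᵒᵖ Q]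
    (q : R →ₗ[Rᵐᵒᵖ] Q) {δ : R → R}
    (hq : IsRightRingOfQuotients F q) (hδ : IsDerivation δ) (y z : Q) :
    extDer F q hq hδ (y * z) = extDer F q hq hδ y * z + y * extDer F q hq hδ z := by
  set E := extDer F q hq hδ with hE
  have sm : ∀ (a : Rᵐᵒᵖ) (w : Q), a • w = w * q (unop a) := by
    intro a w
    rw [← hq.smul_def (unop a) w, op_unop]
  set D : Q → Q := fun u => E (y * u) - E y * u - y * E u with hD
  have hs : ∀ (x : Rᵐᵒᵖ) (u : Q), D (x • u) = x • D u := by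
    intro x u
    have e1 : y * (x • u) = x • (y * u) := by rw [sm, sm, mul_assoc]
    have e2 : E y * (x • u) = x • (E y * u) := by rw [sm, sm, mul_assoc]
    have e3 : y * E (x • u) = x • (y * E u) + op (δ (unop x)) • (y * u) := by
      rw [hE, extDer_smul F q hq hδ x u, ← hE, mul_add]
      congr 1
      · rw [sm x (E u), ← mul_assoc, ← sm x (y * E u)]
      · rw [hq.smul_def (δ (unop x)) u, ← mul_assoc, ← hq.smul_def (δ (unop x)) (y * u)]
    simp only [hD]
    rw [e1, hE, extDer_smul F q hq hδ x (y * u), ← hE, e2, e3, smul_sub, smul_sub]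
    abel
  have h0 : ∀ r : R, D (q r) = 0 := by
    intro r
    simp only [hD]
    have e1 : y * q r = op r • y := (hq.smul_def r y).symm
    have e2 : E (op r • y) = op r • E y + op (δ r) • y := by
      have h := extDer_smul F q hq hδ (op r) y
      rwa [unop_op, ← hE] at h
    rw [e1, e2, hE, extDer_map F q hq hδ r, ← hE, hq.smul_def r (E y),
      hq.smul_def (δ r) y]
    abel
  have hz := vanish_aux (subset_rfl) q hq.quotients.coker_torsion
    hq.quotients.torsionFree D hs h0 z
  simp only [hD] at hz
  rw [sub_sub, sub_eq_zero] at hz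
  exact hz

lemma extDer_isDerivation (F : RightGabrielFilter R) {Q : Type*} [Ring Q]
    [Module Rᵐᵒᵖ Q] (q : R →ₗ[Rᵐᵒᵖ] Q) {δ : R → R}
    (hq : IsRightRingOfQuotients F q) (hδ : IsDerivation δ) :
    IsDerivation (extDer F q hq hδ) :=
  ⟨extDer_add F q hq hδ, extDer_mul F q hq hδ⟩

lemma extDer_compat {F F' : RightGabrielFilter R} (hFF' : F.sets ⊆ F'.sets)
    {δ : R → R} (hδ : IsDerivation δ)
    {Q Q' : Type*} [Ring Q] [Module Rᵐᵒᵖ Q] [Ring Q'] [Module Rᵐᵒᵖ Q']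
    (q : R →ₗ[Rᵐᵒᵖ] Q) (q' : R →ₗ[Rᵐᵒᵖ] Q')
    (hq : IsRightRingOfQuotients F q) (hq' : IsRightRingOfQuotients F' q')
    (φ : Q →ₗ[Rᵐᵒᵖ] Q') (hφ : ∀ r, φ (q r) = q' r) (y : Q) :
    extDer F' q' hq' hδ (φ y) = φ (extDer F q hq hδ y) := by
  set D : Q → Q' := fun u => extDer F' q' hq' hδ (φ u) - φ (extDer F q hq hδ u) with hD
  have hs : ∀ (x : Rᵐᵒᵖ) (u : Q), D (x • u) = x • D u := by
    intro x u
    simp only [hD]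
    rw [map_smul, extDer_smul F' q' hq' hδ x (φ u), extDer_smul F q hq hδ x u,
      map_add, map_smul, map_smul, smul_sub]
    abel
  have h0 : ∀ r : R, D (q r) = 0 := by
    intro r
    simp only [hD]
    rw [hφ, extDer_map F' q' hq' hδ r, extDer_map F q hq hδ r, hφ, sub_self]
  have hz := vanish_aux hFF' q hq.quotients.coker_torsion hq'.quotients.torsionFree
    D hs h0 y
  simp only [hD] at hz
  exact sub_eq_zero.mp hz

end Vanish

section Perfect

variable {R : Type*} [Ring R]

lemma cl_inv (F : RightGabrielFilter R)
    (hF : F.sets = {I : Ideal Rᵐᵒᵖ | ∃ t : R, IsRegular t ∧ op t ∈ I})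
    {Q : Type*} [Ring Q] [Module Rᵐᵒᵖ Q] (q : R →ₗ[Rᵐᵒᵖ] Q)
    (hq : IsRightRingOfQuotients F q) {t : R} (ht : IsRegular t) :
    ∃ v : Q, q t * v = 1 ∧ v * q t = 1 := by
  classical
  set I : Ideal Rᵐᵒᵖ := Submodule.span Rᵐᵒᵖ {op t} with hIdef
  have hIF : I ∈ F.sets := by
    rw [hF]; exact ⟨t, ht, Submodule.mem_span_singleton_self _⟩
  have hmem : ∀ x : ↥I, ∃ c : R, t * c = unop (x : Rᵐᵒᵖ) := by
    intro x
    obtain ⟨c, hc⟩ := Submodule.mem_span_singleton.mp x.2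
    exact ⟨unop c, by rw [← hc]; rfl⟩
  set cc : ↥I → R := fun x => Classical.choose (hmem x) with hccdef
  have hcc : ∀ x : ↥I, t * cc x = unop (x : Rᵐᵒᵖ) := fun x => Classical.choose_spec (hmem x)
  have hccu : ∀ (x : ↥I) (c : R), t * c = unop (x : Rᵐᵒᵖ) → c = cc x := by
    intro x c hc
    exact ht.1 (show t * c = t * cc x by rw [hc, hcc])
  set f : ↥I →ₗ[Rᵐᵒᵖ] Q :=
    { toFun := fun x => q (cc x)
      map_add' := by
        intro x x'
        have h2 : cc x + cc x' = cc (x + x') := by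
          refine hccu _ _ ?_
          rw [mul_add, hcc, hcc, Submodule.coe_add, unop_add]
        rw [← h2, map_add]
      map_smul' := by
        intro a x
        dsimp only [RingHom.id_apply]
        have h2 : t * (a • cc x) = unop ((a • x : ↥I) : Rᵐᵒᵖ) := by
          show t * (cc x * unop a) = _
          rw [← mul_assoc, hcc]
          rfl
        rw [← hccu _ _ h2, map_smul] }
    with hfdef
  have f_apply : ∀ x : ↥I, f x = q (cc x) := fun _ => rfl
  obtain ⟨g, hg⟩ := hq.quotients.closed I hIF f
  set v := g 1 with hvdef
  have hmemt : op t ∈ I := Submodule.mem_span_singleton_self _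
  have hvt : v * q t = 1 := by
    have h1 : op t • v = g (op t) := by
      rw [hvdef, ← map_smul]
      congr 1
      exact mul_one (op t)
    have h2 : g (op t) = 1 := by
      refine (hg ⟨op t, hmemt⟩).trans ?_
      rw [f_apply]
      have h3 : (1 : R) = cc ⟨op t, hmemt⟩ := hccu _ _ (by rw [mul_one]; rfl)
      rw [← h3]
      exact hq.map_one
    rw [← hq.smul_def t v, h1, h2]
  have htv : q t * v = 1 := by
    set u0 := q t * v - 1 with hu0def
    have h4 : op t • u0 = 0 := by
      rw [hq.smul_def, hu0def, sub_mul, one_mul, mul_assoc, hvt, mul_one, sub_self]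
    have h5 : u0 ∈ torsionSet F.sets Q := by
      show LinearMap.ker (LinearMap.toSpanSingleton Rᵐᵒᵖ Q u0) ∈ F.sets
      rw [hF]
      refine ⟨t, ht, ?_⟩
      rw [LinearMap.mem_ker, LinearMap.toSpanSingleton_apply]
      exact h4
    rw [hq.quotients.torsionFree] at h5
    have h6 : u0 = 0 := h5
    rw [hu0def] at h6
    exact sub_eq_zero.mp h6
  exact ⟨v, htv, hvt⟩

lemma cl_perfect_filter_eq (F : RightGabrielFilter R)
    (hF : F.sets = {I : Ideal Rᵐᵒᵖ | ∃ t : R, IsRegular t ∧ op t ∈ I})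
    {Q : Type*} [Ring Q] [Module Rᵐᵒᵖ Q] (q : R →ₗ[Rᵐᵒᵖ] Q)
    (hq : IsRightRingOfQuotients F q) :
    F.sets = {J : Ideal Rᵐᵒᵖ |
      Submodule.span Qᵐᵒᵖ ((fun j : Rᵐᵒᵖ => q (unop j)) '' (J : Set Rᵐᵒᵖ)) = ⊤} := by
  ext J
  constructor
  · intro hJ
    have hJ' := hJ
    rw [hF] at hJ'
    obtain ⟨t, ht, htJ⟩ := hJ'
    obtain ⟨v, hv1, _⟩ := cl_inv F hF q hq ht
    show Submodule.span Qᵐᵒᵖ ((fun j : Rᵐᵒᵖ => q (unop j)) '' (J : Set Rᵐᵒᵖ)) = ⊤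
    rw [eq_top_iff]
    intro u _
    have h1 : q t ∈ Submodule.span Qᵐᵒᵖ ((fun j : Rᵐᵒᵖ => q (unop j)) '' (J : Set Rᵐᵒᵖ)) :=
      Submodule.subset_span ⟨op t, htJ, rfl⟩
    have h2 := Submodule.smul_mem _ (op v) h1
    rw [op_smul_eq_mul, hv1] at h2
    have h3 := Submodule.smul_mem _ (op u) h2
    rwa [op_smul_eq_mul, one_mul] at h3
  · intro hJmem
    have hJ : Submodule.span Qᵐᵒᵖ ((fun j : Rᵐᵒᵖ => q (unop j)) '' (J : Set Rᵐᵒᵖ)) = ⊤ :=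
      hJmem
    show J ∈ F.sets
    set J' : Submodule Rᵐᵒᵖ R :=
      { carrier := {r : R | op r ∈ J}
        add_mem' := by
          intro a b ha hb
          show op (a + b) ∈ J
          rw [op_add]; exact J.add_mem ha hb
        zero_mem' := by show op (0 : R) ∈ J; rw [op_zero]; exact J.zero_mem
        smul_mem' := by
          intro a r hr
          show op (a • r) ∈ J
          have h1 : op (a • r) = a • op r := by
            show op (r * unop a) = _
            rw [op_mul, op_unop]; rfl
          rw [h1]; exact J.smul_mem a hr }
      with hJ'def
    set MJ : Submodule Rᵐᵒᵖ Q := Submodule.map q J' with hMJdef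
    have hCspan : ∀ u ∈ Submodule.span Qᵐᵒᵖ ((fun j : Rᵐᵒᵖ => q (unop j)) '' (J : Set Rᵐᵒᵖ)),
        Submodule.comap (LinearMap.toSpanSingleton Rᵐᵒᵖ Q u) MJ ∈ F.sets := by
      intro u hu
      induction hu using Submodule.span_induction with
      | mem u hu =>
        obtain ⟨j, hjJ, rfl⟩ := hu
        refine F.mono F.top_mem ?_
        intro x _
        rw [Submodule.mem_comap, LinearMap.toSpanSingleton_apply, ← map_smul]
        refine Submodule.mem_map_of_mem ?_
        show op (x • unop j) ∈ J
        show op (unop j * unop x) ∈ J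
        rw [op_mul, op_unop, op_unop]
        exact J.smul_mem x hjJ
      | zero =>
        refine F.mono F.top_mem ?_
        intro x _
        rw [Submodule.mem_comap, LinearMap.toSpanSingleton_apply, smul_zero]
        exact MJ.zero_mem
      | add u u' _ _ hCu hCu' =>
        refine F.mono (F.inf_mem hCu hCu') ?_
        intro x hx
        rw [Submodule.mem_inf] at hx
        obtain ⟨hx1, hx2⟩ := hx
        rw [Submodule.mem_comap, LinearMap.toSpanSingleton_apply] at hx1 hx2 ⊢
        rw [smul_add]
        exact MJ.add_mem hx1 hx2
      | smul w u _ hCu =>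
        have hIwF : Submodule.comap (LinearMap.toSpanSingleton Rᵐᵒᵖ Q (unop w))
            (LinearMap.range q) ∈ F.sets := hq.quotients.coker_torsion (unop w)
        refine F.trans hIwF ?_
        intro s hs
        rw [Submodule.mem_comap, LinearMap.toSpanSingleton_apply] at hs
        obtain ⟨r, hr⟩ := hs
        refine F.mono (F.quot_mem hCu (op r)) ?_
        intro x hx
        rw [Submodule.mem_comap, LinearMap.toSpanSingleton_apply,
          Submodule.mem_comap, LinearMap.toSpanSingleton_apply] at hx
        rw [Submodule.mem_comap, LinearMap.toSpanSingleton_apply,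
          Submodule.mem_comap, LinearMap.toSpanSingleton_apply]
        have sm : ∀ (a : Rᵐᵒᵖ) (z : Q), a • z = z * q (unop a) := by
          intro a z
          rw [← hq.smul_def (unop a) z, op_unop]
        have key : (x • s) • (w • u) = (x • op r) • u := by
          have h1 : (x • s : Rᵐᵒᵖ) = x * s := rfl
          have h1' : (x • op r : Rᵐᵒᵖ) = x * op r := rfl
          rw [h1, h1', mul_smul, mul_smul]
          congr 1
          show s • (w • u) = op r • u
          rw [sm s, sm (op r), unop_op]
          have h2 : w • u = u * unop w := rfl
          rw [h2, mul_assoc]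
          congr 1
          rw [hr, sm s (unop w)]
        rw [key]
        exact hx
    have hC1 : Submodule.comap (LinearMap.toSpanSingleton Rᵐᵒᵖ Q 1) MJ ∈ F.sets :=
      hCspan 1 (by rw [hJ]; trivial)
    refine F.trans hC1 ?_
    intro x hx
    rw [Submodule.mem_comap, LinearMap.toSpanSingleton_apply] at hx
    have hx' : q (unop x) ∈ MJ := by
      have h1 : x • (1 : Q) = q (unop x) := by
        have h1a := hq.smul_def (unop x) (1 : Q)
        rw [op_unop] at h1a
        rw [h1a, one_mul]
      rwa [h1] at hx
    obtain ⟨r, hrJ', hr⟩ := Submodule.mem_map.mp hx'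
    have htor : LinearMap.ker (LinearMap.toSpanSingleton Rᵐᵒᵖ R (unop x - r)) ∈ F.sets := by
      have h2 : unop x - r ∈ torsionSet F.sets R := by
        rw [← hq.quotients.ker_eq]
        show unop x - r ∈ LinearMap.ker q
        rw [LinearMap.mem_ker, map_sub, sub_eq_zero]
        exact hr.symm
      exact h2
    rw [hF] at htor
    obtain ⟨t, ht, htk⟩ := htor
    rw [LinearMap.mem_ker, LinearMap.toSpanSingleton_apply] at htk
    have h6 : (unop x - r) * t = 0 := htk
    rw [sub_mul, sub_eq_zero] at h6
    rw [hF]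
    refine ⟨t, ht, ?_⟩
    rw [Submodule.mem_comap, LinearMap.toSpanSingleton_apply]
    have h8 : op r ∈ J := hrJ'
    have h7 : (op t • x : Rᵐᵒᵖ) = op t • op r := by
      show op t * x = op t * op r
      calc op t * x = op (unop x * t) := by rw [op_mul, op_unop]
        _ = op (r * t) := by rw [h6]
        _ = op t * op r := by rw [op_mul]
    rw [h7]
    exact J.smul_mem (op t) h8

end Perfect

/-- Let `R` be a right Ore ring (for every regular `t` and every `r`
there are `t'` regular and `s` with `r * t' = t * s`) with classical right ring of
quotients `Q_cl(R)` (the ring of quotients of the classical filter, consisting of the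
right ideals containing a regular element), and let `δ` be a derivation on `R`.  Then the
extension of `δ` to `Q_cl(R)` agrees with the extensions of `δ` to the maximal right ring
of quotients `Q_max(R)` (Lambek torsion theory) and to the total right ring of quotients
`Q_tot(R)` (largest perfect filter). -/
theorem classical_extension_agrees {R : Type u} [Ring R]
    (hOre : ∀ r t : R, IsRegular t → ∃ t' s : R, IsRegular t' ∧ r * t' = t * s)
    (δ : R → R) (hδ : IsDerivation δ)
    (Fcl : RightGabrielFilter R)
    (hFcl : Fcl.sets = {I : Ideal Rᵐᵒᵖ | ∃ t : R, IsRegular t ∧ op t ∈ I})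
    (FL : RightGabrielFilter R) (hFL : FL.sets = {I : Ideal Rᵐᵒᵖ | IsDenseRightIdeal I})
    (Ft : RightGabrielFilter R) (hFt : IsPerfectFilter Ft)
    (hFtMax : ∀ F' : RightGabrielFilter R, IsPerfectFilter F' → F'.sets ⊆ Ft.sets)
    {Qcl QM Qt : Type u} [Ring Qcl] [Module Rᵐᵒᵖ Qcl] [Ring QM] [Module Rᵐᵒᵖ QM]
    [Ring Qt] [Module Rᵐᵒᵖ Qt]
    (qcl : R →ₗ[Rᵐᵒᵖ] Qcl) (qM : R →ₗ[Rᵐᵒᵖ] QM) (qt : R →ₗ[Rᵐᵒᵖ] Qt)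
    (hqcl : IsRightRingOfQuotients Fcl qcl) (hqM : IsRightRingOfQuotients FL qM)
    (hqt : IsRightRingOfQuotients Ft qt)
    (qclM : Qcl →ₗ[Rᵐᵒᵖ] QM) (hqclM : ∀ r : R, qclM (qcl r) = qM r)
    (qclt : Qcl →ₗ[Rᵐᵒᵖ] Qt) (hqclt : ∀ r : R, qclt (qcl r) = qt r) :
    ∃ (δcl : Qcl → Qcl) (δM : QM → QM) (δt : Qt → Qt),
      IsDerivation δcl ∧ IsDerivation δM ∧ IsDerivation δt ∧
      (∀ r : R, δcl (qcl r) = qcl (δ r)) ∧ (∀ r : R, δM (qM r) = qM (δ r)) ∧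
      (∀ r : R, δt (qt r) = qt (δ r)) ∧
      (∀ y : Qcl, δM (qclM y) = qclM (δcl y)) ∧
      (∀ y : Qcl, δt (qclt y) = qclt (δcl y)) := by
  classical
  have hsub1 : Fcl.sets ⊆ FL.sets := by
    rw [hFcl, hFL]
    rintro I ⟨t, ht, htI⟩
    intro x y hx
    obtain ⟨t', s, ht', hts⟩ := hOre y t ht
    refine ⟨t', ?_, ?_⟩
    · have h1 : op t' * op y = op s • op t := by
        rw [← op_mul, hts]
        show op (t * s) = op s * op t
        rw [op_mul]
      rw [h1]
      exact I.smul_mem _ htI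
    · intro h0
      exact hx (ht'.2 (show x * t' = 0 * t' by rw [zero_mul]; exact h0))
  have hsub2 : Fcl.sets ⊆ Ft.sets := by
    refine hFtMax Fcl ⟨⟨Qcl, qcl, ?_, hqcl⟩⟩
    exact cl_perfect_filter_eq Fcl hFcl qcl hqcl
  refine ⟨extDer Fcl qcl hqcl hδ, extDer FL qM hqM hδ, extDer Ft qt hqt hδ,
    extDer_isDerivation Fcl qcl hqcl hδ, extDer_isDerivation FL qM hqM hδ,
    extDer_isDerivation Ft qt hqt hδ,
    extDer_map Fcl qcl hqcl hδ, extDer_map FL qM hqM hδ, extDer_map Ft qt hqt hδ,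
    fun y => extDer_compat hsub1 hδ qcl qM hqcl hqM qclM hqclM y,
    fun y => extDer_compat hsub2 hδ qcl qt hqcl hqt qclt hqclt y⟩
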